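/- arXiv:2102.05455 — 7 statements merged into one kernel-verified Lean document; each statement's English description precedes it below -/
import Mathlib

section
/- In every involutive Stone algebra, the operation defined by ¬x := ∼∇x (where ∼ is the De Morgan negation and ∇ the modal operator) satisfies the Stone identity: ¬x ∨ ¬¬x = ⊤. -/
/-!
Applying the involution `∼`, the identity becomes `∇x ∧ ∇∼∇x = ⊥`. Since `∇` preserves meets
and `∇⊥ = ⊥`, it suffices that `x ∧ ∼∇x = ⊥`, which holds because `x ≤ ∇x` and `∇x ∧ ∼∇x = ⊥`.
-/

/-- An involutive Stone algebra: a De Morgan algebra (bounded distributive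
lattice with an involution `snot` satisfying the De Morgan laws) equipped
with a unary operation `nabla` satisfying (IS1)-(IS4). -/
class InvolutiveStone (α : Type*) extends DistribLattice α, BoundedOrder α where
  snot : α → α
  nabla : α → α
  snot_sup : ∀ x y : α, snot (x ⊔ y) = snot x ⊓ snot y
  snot_snot : ∀ x : α, snot (snot x) = x
  snot_top : snot (⊤ : α) = ⊥
  nabla_bot : nabla (⊥ : α) = ⊥
  inf_nabla : ∀ x : α, x = x ⊓ nabla x
  nabla_inf : ∀ x y : α, nabla (x ⊓ y) = nabla x ⊓ nabla y
  snot_nabla_inf : ∀ x : α, snot (nabla x) ⊓ nabla x = ⊥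

open InvolutiveStone

namespace InvolutiveStone

variable {α : Type*} [InvolutiveStone α]

theorem snot_injective : Function.Injective (snot : α → α) :=
  Function.LeftInverse.injective snot_snot

theorem sup_eq_top_of_snot_inf_snot_eq_bot {a b : α} (h : snot a ⊓ snot b = ⊥) :
    a ⊔ b = ⊤ :=
  snot_injective (by rw [snot_sup, h, snot_top])

theorem le_nabla (x : α) : x ≤ nabla x :=
  inf_eq_left.mp (inf_nabla x).symm

theorem inf_snot_nabla (x : α) : x ⊓ snot (nabla x) = ⊥ :=
  eq_bot_iff.mpr <| calc
    x ⊓ snot (nabla x) ≤ nabla x ⊓ snot (nabla x) := inf_le_inf_right _ (le_nabla x)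
    _ = ⊥ := by rw [inf_comm, snot_nabla_inf]

theorem nabla_inf_nabla_snot_nabla (x : α) : nabla x ⊓ nabla (snot (nabla x)) = ⊥ := by
  rw [← nabla_inf, inf_snot_nabla, nabla_bot]

end InvolutiveStone

/-- the operation `¬x := ∼∇x` satisfies the Stone identity. -/
theorem stone_identity {α : Type*} [InvolutiveStone α] (x : α) :
    snot (nabla x) ⊔ snot (nabla (snot (nabla x))) = ⊤ :=
  sup_eq_top_of_snot_inf_snot_eq_bot (by
    rw [snot_snot, snot_snot]
    exact nabla_inf_nabla_snot_nabla x)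
end

section
/- In every involutive Stone algebra, the operation ¬x := ∼∇x is a pseudo-complement: for all a, b, a ∧ b = ⊥ if and only if a ≤ ¬b. -/
open InvolutiveStone

/-!
`∇b` has `∼∇b` as a lattice complement: they meet in `⊥` by (IS4), and applying the De Morgan
involution to that identity shows they join to `⊤`. Moreover `a` is disjoint from `b` iff it is
disjoint from `∇b`, since `b ≤ ∇b` and, conversely, `a ⊓ ∇b ≤ ∇a ⊓ ∇b = ∇(a ⊓ b)` with `∇⊥ = ⊥`.
Being disjoint from an element with complement `c` means lying below `c`.
-/

namespace InvolutiveStone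

variable {α : Type*} [InvolutiveStone α]

theorem isCompl_nabla_snot_nabla (x : α) : IsCompl (nabla x) (snot (nabla x)) := by
  refine IsCompl.of_eq (by rw [inf_comm, snot_nabla_inf]) (snot_injective ?_)
  rw [snot_sup, snot_snot, snot_nabla_inf, snot_top]

theorem inf_nabla_eq_bot_iff {a b : α} : a ⊓ nabla b = ⊥ ↔ a ⊓ b = ⊥ := by
  refine ⟨eq_bot_mono (inf_le_inf_left a (le_nabla b)), fun hab => eq_bot_mono ?_ nabla_bot⟩
  calc a ⊓ nabla b ≤ nabla a ⊓ nabla b := inf_le_inf_right _ (le_nabla a)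
    _ = nabla ⊥ := by rw [← nabla_inf, hab]

end InvolutiveStone

/-- `¬x := ∼∇x` is a pseudo-complement. -/
theorem pseudo_complement {α : Type*} [InvolutiveStone α] (a b : α) :
    a ⊓ b = ⊥ ↔ a ≤ snot (nabla b) :=
  inf_nabla_eq_bot_iff.symm.trans (isCompl_nabla_snot_nabla b).inf_left_eq_bot_iff
end

section
/- Let A be a De Morgan algebra. Define A^∇ on the set A ∪ {⊥̂, ⊤̂} (two fresh elements) by adjoining ⊥̂ as a new bottom and ⊤̂ as a new top to the lattice order of A, extending ∼ by ∼⊤̂ = ⊥̂ and ∼⊥̂ = ⊤̂, and defining ∇⊥̂ = ⊥̂ and ∇x = ⊤̂ for all x ≠ ⊥̂. Then A^∇ is an involutive Stone algebra. -/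
/-! Every element of `A^∇` is `⊥̂`, `⊤̂` or an element of `A`, so each identity is a finite case
check: on `A` the De Morgan laws are those of `A`, and `∇` only takes the values `⊥̂` and `⊤̂`,
which the extended negation swaps. -/

section
variable {α : Type*} [DistribLattice α] [BoundedOrder α]

/-- The extension of the De Morgan negation of `α` to `A^∇ = A ∪ {⊥̂, ⊤̂}`,
modelled as `WithBot (WithTop α)`: the two new extreme elements are swapped. -/
def extNot (neg : α → α) : WithBot (WithTop α) → WithBot (WithTop α)
  | none => some none                       -- ∼⊥̂ = ⊤̂
  | some none => none                       -- ∼⊤̂ = ⊥̂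
  | some (some a) => some (some (neg a))

/-- The operation `∇` on `A^∇`: `∇⊥̂ = ⊥̂` and `∇x = ⊤̂` for `x ≠ ⊥̂`. -/
def extNabla : WithBot (WithTop α) → WithBot (WithTop α)
  | none => none
  | some _ => some none

end

section
variable {α : Type*}

@[elab_as_elim]
def WithBot.recBotTopCoe {motive : WithBot (WithTop α) → Sort*} (bot : motive ⊥) (top : motive ⊤)
    (coe : ∀ a : α, motive ((a : WithTop α) : WithBot (WithTop α))) :
    ∀ x, motive x
  | none => bot
  | some none => top
  | some (some a) => coe a

section extNot
variable (neg : α → α)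

@[simp] theorem extNot_bot : extNot neg ⊥ = ⊤ := rfl

@[simp] theorem extNot_top : extNot neg ⊤ = ⊥ := rfl

@[simp] theorem extNot_coe_coe (a : α) :
    extNot neg ((a : WithTop α) : WithBot (WithTop α)) = ((neg a : WithTop α) : WithBot (WithTop α)) :=
  rfl

variable {neg}

theorem extNot_sup [Lattice α] (hsup : ∀ a b : α, neg (a ⊔ b) = neg a ⊓ neg b)
    (x y : WithBot (WithTop α)) :
    extNot neg (x ⊔ y) = extNot neg x ⊓ extNot neg y := by
  induction x using WithBot.recBotTopCoe <;> induction y using WithBot.recBotTopCoe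
  case coe.coe a b =>
    rw [← WithBot.coe_sup, ← WithTop.coe_sup, extNot_coe_coe, hsup]
    simp
  all_goals simp

theorem extNot_extNot (hinv : ∀ a : α, neg (neg a) = a) (x : WithBot (WithTop α)) :
    extNot neg (extNot neg x) = x := by
  induction x using WithBot.recBotTopCoe <;> simp [hinv]

end extNot

@[simp] theorem extNabla_bot : extNabla (⊥ : WithBot (WithTop α)) = ⊥ := rfl

@[simp] theorem extNabla_coe (x : WithTop α) : extNabla (x : WithBot (WithTop α)) = ⊤ := rfl

theorem le_extNabla [Preorder α] (x : WithBot (WithTop α)) : x ≤ extNabla x := by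
  induction x using WithBot.recBotCoe <;> simp

theorem extNabla_inf [SemilatticeInf α] (x y : WithBot (WithTop α)) :
    extNabla (x ⊓ y) = extNabla x ⊓ extNabla y := by
  induction x using WithBot.recBotCoe <;> induction y using WithBot.recBotCoe
  case coe.coe a b => rw [← WithBot.coe_inf, extNabla_coe, extNabla_coe, extNabla_coe, inf_idem]
  all_goals simp

theorem extNot_extNabla_inf_extNabla [SemilatticeInf α] (neg : α → α) (x : WithBot (WithTop α)) :
    extNot neg (extNabla x) ⊓ extNabla x = ⊥ := by
  induction x using WithBot.recBotCoe <;> simp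

end

section
variable {α : Type*} [DistribLattice α] [BoundedOrder α]

theorem extension_is_involutive_stone_general (neg : α → α)
    (hsup : ∀ x y : α, neg (x ⊔ y) = neg x ⊓ neg y)
    (hinv : ∀ x : α, neg (neg x) = x) :
    (∀ x y : WithBot (WithTop α),
        extNot neg (x ⊔ y) = extNot neg x ⊓ extNot neg y) ∧
    (∀ x : WithBot (WithTop α), extNot neg (extNot neg x) = x) ∧
    (extNot neg (⊤ : WithBot (WithTop α)) = ⊥) ∧
    (extNabla (⊥ : WithBot (WithTop α)) = ⊥) ∧
    (∀ x : WithBot (WithTop α), x = x ⊓ extNabla x) ∧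
    (∀ x y : WithBot (WithTop α), extNabla (x ⊓ y) = extNabla x ⊓ extNabla y) ∧
    (∀ x : WithBot (WithTop α), extNot neg (extNabla x) ⊓ extNabla x = ⊥) :=
  ⟨extNot_sup hsup, extNot_extNot hinv, extNot_top neg, extNabla_bot,
    fun x => (inf_of_le_left (le_extNabla x)).symm, extNabla_inf,
    extNot_extNabla_inf_extNabla neg⟩

/-- for any De Morgan algebra `A`, the algebra `A^∇` obtained by
adjoining a new bottom and a new top, with the extended negation and the
operation `∇` above, is an involutive Stone algebra. -/
theorem extension_is_involutive_stone (neg : α → α)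
    (hsup : ∀ x y : α, neg (x ⊔ y) = neg x ⊓ neg y)
    (hinv : ∀ x : α, neg (neg x) = x)
    (htop : neg (⊤ : α) = ⊥) :
    (∀ x y : WithBot (WithTop α),
        extNot neg (x ⊔ y) = extNot neg x ⊓ extNot neg y) ∧
    (∀ x : WithBot (WithTop α), extNot neg (extNot neg x) = x) ∧
    (extNot neg (⊤ : WithBot (WithTop α)) = ⊥) ∧
    (extNabla (⊥ : WithBot (WithTop α)) = ⊥) ∧
    (∀ x : WithBot (WithTop α), x = x ⊓ extNabla x) ∧
    (∀ x y : WithBot (WithTop α), extNabla (x ⊓ y) = extNabla x ⊓ extNabla y) ∧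
    (∀ x : WithBot (WithTop α), extNot neg (extNabla x) ⊓ extNabla x = ⊥) :=
  extension_is_involutive_stone_general neg hsup hinv

end
end

section
/- In the matrix ⟨IS₆, ↑1⟩ (designated set the principal up-set of 1, i.e., {1, ⊤̂}), the Leibniz congruence is the identity relation; that is, the matrix is reduced. -/
/-- The four-element De Morgan algebra `DM₄` (the diamond), modelled as
`Bool × Bool`: `0 = (false, false)`, `1 = (true, true)`, `a = (false, true)`,
`b = (true, false)`. -/
abbrev DM4 := Bool × Bool

/-- The De Morgan negation of `DM₄`. -/
def dm4Not (p : DM4) : DM4 := (!p.2, !p.1)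

/-- `IS₆`: `DM₄` with a new bottom `⊥̂` and a new top `⊤̂` adjoined. -/
abbrev IS6 := WithBot (WithTop DM4)

/-- The negation of `IS₆`. -/
def is6Not : IS6 → IS6
  | none => some none
  | some none => none
  | some (some p) => some (some (dm4Not p))

/-- The operation `∇` of `IS₆`: `∇⊥̂ = ⊥̂` and `∇x = ⊤̂` otherwise. -/
def is6Nabla : IS6 → IS6
  | none => none
  | some _ => some none

/-- A congruence of `IS₆`: an equivalence relation compatible with all the
operations `⊓`, `⊔`, `∼`, `∇`. -/
def IS6Congr (r : IS6 → IS6 → Prop) : Prop :=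
  Equivalence r ∧
  (∀ a b c d : IS6, r a b → r c d → r (a ⊓ c) (b ⊓ d)) ∧
  (∀ a b c d : IS6, r a b → r c d → r (a ⊔ c) (b ⊔ d)) ∧
  (∀ a b : IS6, r a b → r (is6Not a) (is6Not b)) ∧
  (∀ a b : IS6, r a b → r (is6Nabla a) (is6Nabla b))

/-- The relation `θ` on `IS₆` with classes `{⊥̂}`, `{0, a, b, 1}`, `{⊤̂}`. -/
def is6Theta (x y : IS6) : Prop :=
  (x = ⊥ ∧ y = ⊥) ∨ (x = ⊤ ∧ y = ⊤) ∨
    (x ≠ ⊥ ∧ x ≠ ⊤ ∧ y ≠ ⊥ ∧ y ≠ ⊤)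

/-- The designated set `↑1 = {1, ⊤̂}` of the matrix `⟨IS₆, ↑1⟩`. -/
def is6UpOne (x : IS6) : Prop :=
  x = some (some (true, true)) ∨ x = some none

theorem iff_of_rel_of_compatible {α : Type*} {r : α → α → Prop} {D : α → Prop}
    (hr : ∀ x y, r x y → r y x) (hD : ∀ x y, r x y → D x → D y) {x y : α} (h : r x y) :
    D x ↔ D y :=
  ⟨hD x y h, hD y x (hr x y h)⟩

namespace IS6Congr

variable {r : IS6 → IS6 → Prop} (hr : IS6Congr r)
include hr

theorem nabla {x y : IS6} (h : r x y) : r (is6Nabla x) (is6Nabla y) :=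
  hr.2.2.2.2 _ _ h

theorem nabla_not {x y : IS6} (h : r x y) :
    r (is6Nabla (is6Not x)) (is6Nabla (is6Not y)) :=
  hr.nabla (hr.2.2.2.1 _ _ h)

theorem sup_right {x y : IS6} (h : r x y) (c : IS6) : r (x ⊔ c) (y ⊔ c) :=
  hr.2.2.1 _ _ _ _ h (hr.1.refl c)

end IS6Congr

-- Instance search cannot match the literals `some (some _)` against `WithBot.decidableEq`.
instance : DecidablePred is6UpOne := fun _ =>
  @instDecidableOr _ _ (WithBot.decidableEq _ _) (WithBot.decidableEq _ _)

/-- `∇` separates `⊥̂` from the other elements, `∇ ∘ ∼` separates `⊤̂`, and two distinct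
elements of `DM₄` are separated by joining with a suitable `c`. -/
theorem is6UpOne_separates {x y : IS6} (h : x ≠ y) :
    ¬(is6UpOne (is6Nabla x) ↔ is6UpOne (is6Nabla y)) ∨
      ¬(is6UpOne (is6Nabla (is6Not x)) ↔ is6UpOne (is6Nabla (is6Not y))) ∨
      ∃ c, ¬(is6UpOne (x ⊔ c) ↔ is6UpOne (y ⊔ c)) := by
  revert x y; decide

/-- the matrix `⟨IS₆, ↑1⟩` is reduced: every congruence of `IS₆`
compatible with `↑1` is the identity, so the Leibniz congruence is identity. -/
theorem IS6_up1_reduced :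
    ∀ r : IS6 → IS6 → Prop, IS6Congr r →
      (∀ x y : IS6, r x y → is6UpOne x → is6UpOne y) →
      ∀ x y : IS6, r x y → x = y := by
  intro r hr hD x y hxy
  by_contra hne
  have hiff {u v : IS6} (h : r u v) : is6UpOne u ↔ is6UpOne v :=
    iff_of_rel_of_compatible (fun _ _ => hr.1.symm) hD h
  rcases is6UpOne_separates hne with hsep | hsep | ⟨c, hsep⟩
  · exact hsep (hiff (hr.nabla hxy))
  · exact hsep (hiff (hr.nabla_not hxy))
  · exact hsep (hiff (hr.sup_right hxy c))
end

section
/- In the matrix ⟨IS₆, {⊤̂}⟩, the Leibniz congruence equals the congruence θ identifying {0, a, b, 1}; in particular this matrix is not reduced. -/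
/-!
`θ` is the kernel of the retraction of `IS₆` onto its subalgebra `{⊥̂, a, ⊤̂}` that sends all of
`DM₄` to `a`, the fixed point of the De Morgan negation; so `θ` is a congruence, and it
obviously saturates `{⊤̂}`. Conversely, a congruence saturating `{⊤̂}` also saturates
`{⊥̂} = ∼⁻¹{⊤̂}`, and by symmetry it cannot relate a middle element to `⊥̂` or `⊤̂`.
-/

instance : DecidableRel is6Theta := fun x y => by
  unfold is6Theta; infer_instance

theorem is6Not_eq_top_iff (x : IS6) : is6Not x = ⊤ ↔ x = ⊥ := by
  revert x; decide

theorem is6Theta_iff (x y : IS6) : is6Theta x y ↔ (x = ⊥ ↔ y = ⊥) ∧ (x = ⊤ ↔ y = ⊤) := by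
  revert x y; decide

theorem is6Congr_ker {f : IS6 → IS6} (hinf : ∀ x y, f (x ⊓ y) = f x ⊓ f y)
    (hsup : ∀ x y, f (x ⊔ y) = f x ⊔ f y) (hnot : ∀ x, f (is6Not x) = is6Not (f x))
    (hnabla : ∀ x, f (is6Nabla x) = is6Nabla (f x)) : IS6Congr fun x y => f x = f y := by
  refine ⟨⟨fun _ => rfl, Eq.symm, Eq.trans⟩, ?_, ?_, ?_, ?_⟩ <;> intros <;> simp_all

def is6Collapse : IS6 → IS6
  | none => none
  | some none => some none
  | some (some _) => some (some (false, true))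

theorem is6Theta_iff_is6Collapse_eq (x y : IS6) :
    is6Theta x y ↔ is6Collapse x = is6Collapse y := by
  revert x y; decide

theorem is6Collapse_inf (x y : IS6) : is6Collapse (x ⊓ y) = is6Collapse x ⊓ is6Collapse y := by
  revert x y; decide

theorem is6Collapse_sup (x y : IS6) : is6Collapse (x ⊔ y) = is6Collapse x ⊔ is6Collapse y := by
  revert x y; decide

theorem is6Collapse_is6Not (x : IS6) : is6Collapse (is6Not x) = is6Not (is6Collapse x) := by
  revert x; decide

theorem is6Collapse_is6Nabla (x : IS6) : is6Collapse (is6Nabla x) = is6Nabla (is6Collapse x) := by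
  revert x; decide

theorem is6Congr_is6Theta : IS6Congr is6Theta := by
  have h := is6Congr_ker is6Collapse_inf is6Collapse_sup is6Collapse_is6Not is6Collapse_is6Nabla
  simpa only [← is6Theta_iff_is6Collapse_eq] using h

theorem is6Theta_of_symmetric_of_saturates_top {r : IS6 → IS6 → Prop}
    (hsymm : ∀ {x y}, r x y → r y x)
    (hnot : ∀ x y, r x y → r (is6Not x) (is6Not y)) (htop : ∀ x y, r x y → x = ⊤ → y = ⊤)
    {x y : IS6} (hxy : r x y) : is6Theta x y := by
  have hbot : ∀ {x y}, r x y → x = ⊥ → y = ⊥ := fun hxy hx =>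
    (is6Not_eq_top_iff _).1 (htop _ _ (hnot _ _ hxy) ((is6Not_eq_top_iff _).2 hx))
  rw [is6Theta_iff]
  exact ⟨⟨hbot hxy, hbot (hsymm hxy)⟩, ⟨htop _ _ hxy, htop _ _ (hsymm hxy)⟩⟩

/-- the Leibniz congruence of `⟨IS₆, {⊤̂}⟩` equals `θ`: `θ` is a
congruence compatible with `{⊤̂}`, every compatible congruence is contained in
`θ`, and `θ` is not the identity (so the matrix is not reduced). -/
theorem IS6_top_leibniz_eq_theta :
    IS6Congr is6Theta ∧
    (∀ x y : IS6, is6Theta x y → x = ⊤ → y = ⊤) ∧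
    (∀ r : IS6 → IS6 → Prop, IS6Congr r →
      (∀ x y : IS6, r x y → x = ⊤ → y = ⊤) →
      ∀ x y : IS6, r x y → is6Theta x y) ∧
    (∃ x y : IS6, is6Theta x y ∧ x ≠ y) := by
  refine ⟨is6Congr_is6Theta, fun x y hxy hx => ((is6Theta_iff x y).1 hxy).2.1 hx, ?_, ?_⟩
  · rintro r ⟨hequiv, -, -, hnot, -⟩ htop x y hxy
    exact is6Theta_of_symmetric_of_saturates_top hequiv.symm hnot htop hxy
  · exact ⟨((((false, false) : DM4) : WithTop DM4) : IS6),
      ((((true, true) : DM4) : WithTop DM4) : IS6), by decide, by decide⟩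
end

section
/- The quotient of the matrix ⟨IS₆, {⊤̂}⟩ by its Leibniz congruence is isomorphic (as a matrix) to ⟨IS₃, {⊤̂}⟩, where IS₃ is the three-element subalgebra {⊥̂, 0≡1, ⊤̂} of the quotient. -/
/-- `IS₃`: the three-element chain `⊥̂ < m < ⊤̂`. -/
abbrev IS3 := WithBot (WithTop Unit)

/-- The negation of `IS₃` (fixing the middle element). -/
def is3Not : IS3 → IS3
  | none => some none
  | some none => none
  | some (some u) => some (some u)

/-- The operation `∇` of `IS₃`. -/
def is3Nabla : IS3 → IS3
  | none => none
  | some _ => some none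

namespace LatticeHom

variable {α : Type*} [Lattice α]

def toUnit : LatticeHom α Unit where
  toFun _ := ()
  map_sup' _ _ := rfl
  map_inf' _ _ := rfl

def collapseMiddle : LatticeHom (WithBot (WithTop α)) (WithBot (WithTop Unit)) :=
  toUnit.withTop.withBot

@[simp]
theorem collapseMiddle_bot : collapseMiddle (⊥ : WithBot (WithTop α)) = ⊥ := rfl

@[simp]
theorem collapseMiddle_top : collapseMiddle (⊤ : WithBot (WithTop α)) = ⊤ := rfl

@[simp]
theorem collapseMiddle_coe_coe (a : α) :
    collapseMiddle (((a : WithTop α) : WithBot (WithTop α))) = ((() : WithTop Unit) : WithBot _) :=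
  rfl

theorem collapseMiddle_surjective [Nonempty α] :
    Function.Surjective (collapseMiddle : WithBot (WithTop α) → _) := by
  obtain ⟨a⟩ := ‹Nonempty α›
  rintro (_ | _ | ⟨⟩)
  exacts [⟨⊥, rfl⟩, ⟨⊤, rfl⟩, ⟨((a : WithTop α) : WithBot (WithTop α)), rfl⟩]

theorem collapseMiddle_eq_top_iff {x : WithBot (WithTop α)} :
    collapseMiddle x = ⊤ ↔ x = ⊤ := by
  cases x using WithBot.recBotCoe with
  | bot => simp
  | coe x => cases x using WithTop.recTopCoe <;> simp

theorem collapseMiddle_eq_iff {x y : WithBot (WithTop α)} :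
    collapseMiddle x = collapseMiddle y ↔
      (x = ⊥ ∧ y = ⊥) ∨ (x = ⊤ ∧ y = ⊤) ∨ (x ≠ ⊥ ∧ x ≠ ⊤ ∧ y ≠ ⊥ ∧ y ≠ ⊤) := by
  cases x using WithBot.recBotCoe with
  | bot => cases y using WithBot.recBotCoe with
    | bot => simp
    | coe y => cases y using WithTop.recTopCoe <;> simp
  | coe x => cases x using WithTop.recTopCoe <;> cases y using WithBot.recBotCoe with
    | bot => simp
    | coe y => cases y using WithTop.recTopCoe <;> simp

end LatticeHom

theorem collapseMiddle_is6Not (x : IS6) :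
    LatticeHom.collapseMiddle (is6Not x) = is3Not (LatticeHom.collapseMiddle x) := by
  rcases x with _ | _ | _ <;> rfl

theorem collapseMiddle_is6Nabla (x : IS6) :
    LatticeHom.collapseMiddle (is6Nabla x) = is3Nabla (LatticeHom.collapseMiddle x) := by
  rcases x with _ | _ | _ <;> rfl

/-- the quotient of `⟨IS₆, {⊤̂}⟩` by its Leibniz congruence
(which is `θ`, identifying the four middle elements) is isomorphic to
`⟨IS₃, {⊤̂}⟩`: there is a surjective homomorphism `IS₆ → IS₃` whose kernel is
`θ` and which reflects the designated sets. -/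
theorem IS6_top_quotient_iso_IS3 :
    ∃ h : IS6 → IS3, Function.Surjective h ∧
      (∀ x y : IS6, h (x ⊓ y) = h x ⊓ h y) ∧
      (∀ x y : IS6, h (x ⊔ y) = h x ⊔ h y) ∧
      (∀ x : IS6, h (is6Not x) = is3Not (h x)) ∧
      (∀ x : IS6, h (is6Nabla x) = is3Nabla (h x)) ∧
      (∀ x y : IS6, h x = h y ↔ is6Theta x y) ∧
      (∀ x : IS6, h x = (⊤ : IS3) ↔ x = (⊤ : IS6)) := by
  exact ⟨LatticeHom.collapseMiddle, LatticeHom.collapseMiddle_surjective, map_inf _, map_sup _,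
    collapseMiddle_is6Not, collapseMiddle_is6Nabla, fun _ _ => LatticeHom.collapseMiddle_eq_iff,
    fun _ => LatticeHom.collapseMiddle_eq_top_iff⟩
end

section
/- The three-element algebra IS₃ is simple (has exactly two congruences), while the four-element algebra IS₄ (chain ⊥̂ < 0 < 1 < ⊤̂ with ∼ swapping ⊥̂/⊤̂ and 0/1, ∇⊥̂ = ⊥̂, ∇x = ⊤̂ otherwise) is not simple: the relation identifying 0 and 1 is a non-trivial proper congruence of IS₄. -/
/-- A congruence of `IS₃`. -/
def IS3Congr (r : IS3 → IS3 → Prop) : Prop :=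
  Equivalence r ∧
  (∀ a b c d : IS3, r a b → r c d → r (a ⊓ c) (b ⊓ d)) ∧
  (∀ a b c d : IS3, r a b → r c d → r (a ⊔ c) (b ⊔ d)) ∧
  (∀ a b : IS3, r a b → r (is3Not a) (is3Not b)) ∧
  (∀ a b : IS3, r a b → r (is3Nabla a) (is3Nabla b))

/-- `IS₄`: the four-element chain `⊥̂ < 0 < 1 < ⊤̂`, with
`0 = some (some false)` and `1 = some (some true)`. -/
abbrev IS4 := WithBot (WithTop Bool)

/-- The negation of `IS₄`: it swaps `⊥̂`/`⊤̂` and `0`/`1`. -/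
def is4Not : IS4 → IS4
  | none => some none
  | some none => none
  | some (some b) => some (some (!b))

/-- The operation `∇` of `IS₄`. -/
def is4Nabla : IS4 → IS4
  | none => none
  | some _ => some none

/-- A congruence of `IS₄`. -/
def IS4Congr (r : IS4 → IS4 → Prop) : Prop :=
  Equivalence r ∧
  (∀ a b c d : IS4, r a b → r c d → r (a ⊓ c) (b ⊓ d)) ∧
  (∀ a b c d : IS4, r a b → r c d → r (a ⊔ c) (b ⊔ d)) ∧
  (∀ a b : IS4, r a b → r (is4Not a) (is4Not b)) ∧
  (∀ a b : IS4, r a b → r (is4Nabla a) (is4Nabla b))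

/-- The relation on `IS₄` identifying exactly the two middle elements. -/
def is4Mid (x y : IS4) : Prop :=
  x = y ∨ ((x = some (some false) ∨ x = some (some true)) ∧
           (y = some (some false) ∨ y = some (some true)))

/-!
A congruence of `IS₃` relating two distinct elements relates `⊥` and `⊤`: apply `∇`, preceded
by `∼` when neither element is `⊥`. Meeting with the middle element `m` then relates `⊥` and `m`,
so every element is related to `⊥` and the congruence is total.

Identifying `0` and `1` in `IS₄` is the kernel of the map `IS₄ → IS₃` collapsing them. This map
commutes with `∼` and `∇`, and, being monotone between chains, with `∧` and `∨`; so its kernel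
is a congruence, clearly neither the identity nor total.
-/

namespace IS3Congr

variable {r : IS3 → IS3 → Prop}

lemma rel_bot_top (hr : IS3Congr r) {x y : IS3} (hxy : r x y) (hne : x ≠ y) : r ⊥ ⊤ := by
  obtain ⟨heqv, -, -, hnot, hnabla⟩ := hr
  -- `∇` separates `⊥` from the rest; if neither side is `⊥`, `∼` first moves `⊤` to `⊥`.
  rcases x with _ | _ | _ <;> rcases y with _ | _ | _
  all_goals first
    | exact absurd rfl hne
    | exact hnabla _ _ hxy
    | exact heqv.symm (hnabla _ _ hxy)
    | exact hnabla _ _ (hnot _ _ hxy)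
    | exact heqv.symm (hnabla _ _ (hnot _ _ hxy))

-- The middle element of `IS₃` is `some (some ())`.
lemma rel_bot_mid (hr : IS3Congr r) (h : r ⊥ ⊤) : r ⊥ (some (some ())) :=
  hr.2.1 _ _ _ _ h (hr.1.refl (some (some ())))

theorem eq_or_total (hr : IS3Congr r) : (∀ x y, r x y ↔ x = y) ∨ ∀ x y, r x y := by
  by_cases hid : ∀ x y, r x y → x = y
  · exact Or.inl fun x y => ⟨hid x y, fun h => h ▸ hr.1.refl x⟩
  push Not at hid
  obtain ⟨x, y, hxy, hne⟩ := hid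
  have hbot_top := hr.rel_bot_top hxy hne
  have hbot : ∀ u : IS3, r ⊥ u := by
    rintro (_ | _ | _)
    exacts [hr.1.refl _, hbot_top, hr.rel_bot_mid hbot_top]
  exact Or.inr fun u v => hr.1.trans (hr.1.symm (hbot u)) (hbot v)

end IS3Congr

theorem IS4Congr.of_ker {β : Type*} [Min β] [Max β] {neg nabla : β → β} (f : IS4 → β)
    (hinf : ∀ a b, f (a ⊓ b) = f a ⊓ f b) (hsup : ∀ a b, f (a ⊔ b) = f a ⊔ f b)
    (hneg : ∀ a, f (is4Not a) = neg (f a)) (hnabla : ∀ a, f (is4Nabla a) = nabla (f a)) :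
    IS4Congr fun x y => f x = f y := by
  refine ⟨⟨fun _ => rfl, Eq.symm, Eq.trans⟩, ?_, ?_, ?_, ?_⟩
  · intro a b c d hab hcd
    simp only [hinf, hab, hcd]
  · intro a b c d hab hcd
    simp only [hsup, hab, hcd]
  · intro a b hab
    simp only [hneg, hab]
  · intro a b hab
    simp only [hnabla, hab]

def is4ToIS3 : IS4 → IS3 :=
  WithBot.map (WithTop.map fun _ => ())

lemma monotone_is4ToIS3 : Monotone is4ToIS3 :=
  monotone_const.withTop_map.withBot_map

lemma is4ToIS3_is4Not (a : IS4) : is4ToIS3 (is4Not a) = is3Not (is4ToIS3 a) := by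
  rcases a with _ | _ | _ <;> rfl

lemma is4ToIS3_is4Nabla (a : IS4) : is4ToIS3 (is4Nabla a) = is3Nabla (is4ToIS3 a) := by
  rcases a with _ | _ | _ <;> rfl

lemma is4Mid_eq_ker : is4Mid = fun x y => is4ToIS3 x = is4ToIS3 y := by
  funext x y
  unfold is4Mid
  apply propext
  rcases x with _ | _ | _ | _ <;> rcases y with _ | _ | _ | _
  all_goals first
    | exact iff_of_true (by tauto) rfl
    | exact iff_of_false nofun nofun

lemma is4Congr_is4Mid : IS4Congr is4Mid := by
  rw [is4Mid_eq_ker]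
  exact IS4Congr.of_ker is4ToIS3 monotone_is4ToIS3.map_inf monotone_is4ToIS3.map_sup
    is4ToIS3_is4Not is4ToIS3_is4Nabla

/-- `IS₃` is simple, while `IS₄` is not: identifying `0` and `1`
yields a non-trivial proper congruence of `IS₄`. -/
theorem IS3_simple_IS4_not_simple :
    (∀ r : IS3 → IS3 → Prop, IS3Congr r →
      (∀ x y, r x y ↔ x = y) ∨ (∀ x y, r x y)) ∧
    (IS4Congr is4Mid ∧
      ¬ (∀ x y : IS4, is4Mid x y ↔ x = y) ∧
      ¬ (∀ x y : IS4, is4Mid x y)) := by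
  refine ⟨fun r hr => hr.eq_or_total, is4Congr_is4Mid, fun h => ?_, fun h => ?_⟩
  · nomatch (h (some (some false)) (some (some true))).1 (Or.inr ⟨Or.inl rfl, Or.inr rfl⟩)
  · rcases h ⊥ ⊤ with h | ⟨h | h, -⟩ <;> nomatch h
end
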